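/- For every integer n ≥ 1 and every y ∈ ℝ, (1/(4π)) ∫_{-π}^{π} (sin(x) sin(n x)) / (cosh(y) - cos(x)) dx = (1/2) e^{-n|y|}, provided y ≠ 0. -/

import Mathlib

/-!
With `r = e^{-t}`, `sinh t / (cosh t - cos x) = (1 - r²) / (1 - 2 r cos x + r²)` is the Poisson
kernel, which has the elementary antiderivative `x + 2 arctan (r sin x / (1 - r cos x))`; hence
`∫_{-π}^{π} dx / (cosh t - cos x) = 2π / sinh t`.
From `cos ((k+2)x) = 2 cos x cos ((k+1)x) - cos (kx)` and `cos x = cosh t - (cosh t - cos x)`,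
the moments `J k = cosMoment t k = ∫_{-π}^{π} cos (kx) / (cosh t - cos x) dx` satisfy
`J (k+2) = 2 cosh t · J (k+1) - J k`, the recurrence solved by `e^{-kt}`, so
`J k = 2π e^{-kt} / sinh t`. Finally `2 sin x sin ((k+1)x) = cos (kx) - cos ((k+2)x)` and
`e^{-kt} - e^{-(k+2)t} = 2 sinh t · e^{-(k+1)t}`.
-/

open Real MeasureTheory

lemma one_sub_mul_cos_pos {r : ℝ} (hr : |r| < 1) (x : ℝ) : 0 < 1 - r * cos x := by
  have : |r * cos x| < 1 := by
    rw [abs_mul]; nlinarith [abs_cos_le_one x, abs_nonneg r, abs_nonneg (cos x)]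
  linarith [le_abs_self (r * cos x)]

lemma poisson_denom_pos {r : ℝ} (hr : |r| < 1) (x : ℝ) : 0 < 1 - 2 * r * cos x + r ^ 2 := by
  nlinarith [one_sub_mul_cos_pos hr x, sin_sq_add_cos_sq x, sq_nonneg (r * sin x)]

lemma hasDerivAt_poisson_kernel_antideriv {r : ℝ} (hr : |r| < 1) (x : ℝ) :
    HasDerivAt (fun x => x + 2 * arctan (r * sin x / (1 - r * cos x)))
      ((1 - r ^ 2) / (1 - 2 * r * cos x + r ^ 2)) x := by
  have hden := (one_sub_mul_cos_pos hr x).ne'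
  have hker := (poisson_denom_pos hr x).ne'
  have hquot : HasDerivAt (fun x => r * sin x / (1 - r * cos x))
      (((r * cos x) * (1 - r * cos x) - r * sin x * (r * sin x)) / (1 - r * cos x) ^ 2) x :=
    ((hasDerivAt_sin x).const_mul r).div
      (((hasDerivAt_cos x).const_mul r).const_sub 1 |>.congr_deriv (by ring)) hden
  refine ((hasDerivAt_id x).add ((hquot.arctan).const_mul 2)).congr_deriv ?_
  field_simp
  linear_combination (2 * r ^ 3 * cos x - 2 * r ^ 2) * sin_sq_add_cos_sq x

lemma sinh_div_cosh_sub_cos (t x : ℝ) :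
    sinh t / (cosh t - cos x) =
      (1 - exp (-t) ^ 2) / (1 - 2 * exp (-t) * cos x + exp (-t) ^ 2) := by
  have h : exp t * exp (-t) = 1 := by rw [← exp_add, add_neg_cancel, exp_zero]
  rw [← mul_div_mul_right _ _ (mul_ne_zero two_ne_zero (exp_pos (-t)).ne'), sinh_eq, cosh_eq]
  congr 1 <;> linear_combination h

lemma integral_poisson_kernel {r : ℝ} (hr : |r| < 1) :
    ∫ x in (-π)..π, (1 - r ^ 2) / (1 - 2 * r * cos x + r ^ 2) = 2 * π := by
  have hcont : Continuous fun x => (1 - r ^ 2) / (1 - 2 * r * cos x + r ^ 2) :=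
    continuous_const.div (by fun_prop) fun x => (poisson_denom_pos hr x).ne'
  rw [intervalIntegral.integral_eq_sub_of_hasDerivAt
    (fun x _ => hasDerivAt_poisson_kernel_antideriv hr x) (hcont.intervalIntegrable _ _)]
  simp only [sin_pi, sin_neg, neg_zero, mul_zero, zero_div, arctan_zero, add_zero]
  ring

lemma cosh_sub_cos_pos {t : ℝ} (ht : t ≠ 0) (x : ℝ) : 0 < cosh t - cos x :=
  sub_pos.mpr ((cos_le_one x).trans_lt (one_lt_cosh.mpr ht))

lemma intervalIntegrable_div_cosh_sub_cos {t : ℝ} (ht : t ≠ 0) {f : ℝ → ℝ}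
    (hf : Continuous f) (a b : ℝ) :
    IntervalIntegrable (fun x => f x / (cosh t - cos x)) volume a b :=
  (hf.div (by fun_prop) fun x => (cosh_sub_cos_pos ht x).ne').intervalIntegrable a b

lemma integral_inv_cosh_sub_cos {t : ℝ} (ht : 0 < t) :
    ∫ x in (-π)..π, 1 / (cosh t - cos x) = 2 * π / sinh t := by
  have hsinh : sinh t ≠ 0 := (sinh_pos_iff.mpr ht).ne'
  have hr : |exp (-t)| < 1 := by
    rw [abs_of_pos (exp_pos _), exp_lt_one_iff]; linarith
  rw [eq_div_iff hsinh, ← intervalIntegral.integral_mul_const]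
  simp_rw [one_div_mul_eq_div, sinh_div_cosh_sub_cos t]
  exact integral_poisson_kernel hr

lemma integral_cos_nat_mul {k : ℕ} (hk : k ≠ 0) :
    ∫ x in (-π)..π, cos (k * x) = 0 := by
  rw [intervalIntegral.integral_comp_mul_left cos (Nat.cast_ne_zero.mpr hk), integral_cos,
    mul_neg, sin_neg, sin_nat_mul_pi]
  simp

noncomputable def cosMoment (t : ℝ) (k : ℕ) : ℝ :=
  ∫ x in (-π)..π, cos (k * x) / (cosh t - cos x)

lemma cosMoment_zero {t : ℝ} (ht : 0 < t) : cosMoment t 0 = 2 * π / sinh t := by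
  simpa [cosMoment] using integral_inv_cosh_sub_cos ht

lemma cosMoment_one {t : ℝ} (ht : t ≠ 0) : cosMoment t 1 = cosh t * cosMoment t 0 - 2 * π := by
  have hpt (x : ℝ) : cos x / (cosh t - cos x) = cosh t * (1 / (cosh t - cos x)) - 1 := by
    field_simp [(cosh_sub_cos_pos ht x).ne']
    ring
  simp only [cosMoment, Nat.cast_one, Nat.cast_zero, one_mul, zero_mul, cos_zero, hpt]
  rw [intervalIntegral.integral_sub
    ((intervalIntegrable_div_cosh_sub_cos ht continuous_const _ _).const_mul _)
    intervalIntegrable_const, intervalIntegral.integral_const_mul]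
  simp
  ring

lemma cosMoment_add_two {t : ℝ} (ht : t ≠ 0) (k : ℕ) :
    cosMoment t (k + 2) = 2 * cosh t * cosMoment t (k + 1) - cosMoment t k := by
  have hpt (x : ℝ) : cos ((k + 2 : ℕ) * x) / (cosh t - cos x) =
      2 * cosh t * (cos ((k + 1 : ℕ) * x) / (cosh t - cos x)) - cos (k * x) / (cosh t - cos x)
        - 2 * cos ((k + 1 : ℕ) * x) := by
    have hcos : cos ((k + 2 : ℕ) * x) = 2 * cos x * cos ((k + 1 : ℕ) * x) - cos (k * x) := by
      push_cast
      rw [show ((k : ℝ) + 2) * x = (k + 1) * x + x by ring,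
        show (k : ℝ) * x = (k + 1) * x - x by ring, cos_add, cos_sub]
      ring
    rw [hcos]
    field_simp [(cosh_sub_cos_pos ht x).ne']
    ring
  have hint {j : ℕ} := intervalIntegrable_div_cosh_sub_cos ht (f := fun x => cos (j * x))
    (by fun_prop) (-π) π
  simp only [cosMoment, hpt]
  rw [intervalIntegral.integral_sub ((hint.const_mul _).sub hint)
      (Continuous.intervalIntegrable (by fun_prop) _ _),
    intervalIntegral.integral_sub (hint.const_mul _) hint, intervalIntegral.integral_const_mul,
    intervalIntegral.integral_const_mul, integral_cos_nat_mul k.succ_ne_zero]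
  ring

lemma exp_neg_nat_add_two_mul (t : ℝ) (k : ℕ) :
    exp (-(k + 2 : ℕ) * t) = 2 * cosh t * exp (-(k + 1 : ℕ) * t) - exp (-k * t) := by
  rw [cosh_eq, mul_div_cancel₀ _ two_ne_zero, add_mul, ← exp_add, ← exp_add]
  push_cast
  ring_nf

lemma cosMoment_eq {t : ℝ} (ht : 0 < t) (k : ℕ) :
    cosMoment t k = 2 * π * exp (-k * t) / sinh t := by
  induction k using Nat.twoStepInduction with
  | zero => simp [cosMoment_zero ht]
  | one =>
    rw [cosMoment_one ht.ne', cosMoment_zero ht, Nat.cast_one, neg_one_mul, ← cosh_sub_sinh]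
    field_simp [(sinh_pos_iff.mpr ht).ne']
  | more k ih₀ ih₁ =>
    rw [cosMoment_add_two ht.ne', ih₀, ih₁, exp_neg_nat_add_two_mul]
    ring

lemma exp_neg_nat_mul_sub_exp_neg_nat_add_two_mul (t : ℝ) (k : ℕ) :
    exp (-k * t) - exp (-(k + 2 : ℕ) * t) = 2 * sinh t * exp (-(k + 1 : ℕ) * t) := by
  rw [sinh_eq, mul_div_cancel₀ _ two_ne_zero, sub_mul, ← exp_add, ← exp_add]
  push_cast
  ring_nf

lemma sin_mul_sin_nat_succ_mul (x : ℝ) (k : ℕ) :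
    sin x * sin ((k + 1 : ℕ) * x) = (cos (k * x) - cos ((k + 2 : ℕ) * x)) / 2 := by
  rw [cos_sub_cos, show (k * x + (k + 2 : ℕ) * x) / 2 = (k + 1 : ℕ) * x by push_cast; ring,
    show (k * x - (k + 2 : ℕ) * x) / 2 = -x by push_cast; ring, sin_neg]
  ring

lemma integral_sin_mul_sin_div_cosh_sub_cos {t : ℝ} (ht : t ≠ 0) (k : ℕ) :
    ∫ x in (-π)..π, sin x * sin ((k + 1 : ℕ) * x) / (cosh t - cos x) =
      (cosMoment t k - cosMoment t (k + 2)) / 2 := by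
  have hint {j : ℕ} := intervalIntegrable_div_cosh_sub_cos ht (f := fun x => cos (j * x))
    (by fun_prop) (-π) π
  rw [cosMoment, cosMoment, ← intervalIntegral.integral_sub hint hint,
    ← intervalIntegral.integral_div]
  congr with x
  rw [sin_mul_sin_nat_succ_mul]
  ring

theorem couette_sin_kernel_integral (n : ℕ) (hn : 1 ≤ n) (y : ℝ) (hy : y ≠ 0) :
    (1 / (4 * π)) *
        (∫ x in (-π)..π, (Real.sin x * Real.sin (n * x)) / (Real.cosh y - Real.cos x))
      = (1 / 2) * Real.exp (-(n : ℝ) * |y|) := by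
  obtain ⟨k, rfl⟩ := Nat.exists_eq_add_of_le' hn
  have ht : 0 < |y| := abs_pos.mpr hy
  rw [← cosh_abs y, integral_sin_mul_sin_div_cosh_sub_cos ht.ne', cosMoment_eq ht,
    cosMoment_eq ht, ← sub_div, ← mul_sub, exp_neg_nat_mul_sub_exp_neg_nat_add_two_mul]
  field_simp [(sinh_pos_iff.mpr ht).ne']
  norm_num
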